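/- arXiv:math/0303251 — 4 statements merged into one kernel-verified Lean document; each statement's English description precedes it below -/
import Mathlib

section
/- Fix s ∈ ℂ. Let R₁ = (a₁, b₁; c₁, d₁) and R₂ = (a₂, b₂; c₂, d₂) be 2×2 integer matrices with nonzero determinant such that R₁, R₂ and R₁R₂ each satisfy: c > 0 or (c = 0 and a, d > 0). Let φ be holomorphic on ℂ ∖ (−∞, r] with a₁ − c₁·r > 0, suppose a₂ − c₂·r₁ > 0 where r₁ = max{(d₁r − b₁)/(a₁ − c₁r), −d₁/c₁} is the branching point of φ|_s R₁, and suppose the first-row condition a − c·r > 0 also holds for R₁R₂ = (a, b; c, d). Then (φ|_s R₁)|_s R₂ = φ|_s (R₁R₂) on the common domain of holomorphy. -/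
/-- The cut `(−∞, r]` on the real axis, as a subset of `ℂ`. -/
def cut (r : ℝ) : Set ℂ := {z : ℂ | z.re ≤ r ∧ z.im = 0}

/-- The slash operator
`(φ|ₛ(a,b;c,d))(z) = |ad − bc|^s (cz + d)^{−2s} φ((az + b)/(cz + d))`. -/
noncomputable def slash (s : ℂ) (a b c d : ℤ) (φ : ℂ → ℂ) (z : ℂ) : ℂ :=
  ((|a * d - b * c| : ℤ) : ℂ) ^ s * ((c : ℂ) * z + (d : ℂ)) ^ (-(2 * s)) *
    φ (((a : ℂ) * z + (b : ℂ)) / ((c : ℂ) * z + (d : ℂ)))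

/-- The branching point of `φ|ₛ(a,b;c,d)` when `φ` has branching point `r`:
`max {(dr − b)/(a − cr), −d/c}`, the second entry being dropped if `c = 0`. -/
noncomputable def bp (a b c d : ℤ) (r : ℝ) : ℝ :=
  if c = 0 then ((d : ℝ) * r - (b : ℝ)) / (a : ℝ)
  else max (((d : ℝ) * r - (b : ℝ)) / ((a : ℝ) - (c : ℝ) * r)) (-(d : ℝ) / (c : ℝ))

/-!
With `j(R, z) = cz + d`, the cocycle identity `j(R₁R₂, z) = j(R₁, R₂z) · j(R₂, z)`, the
composition of Möbius maps and `det(R₁R₂) = det R₁ · det R₂` reduce the claim to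
`j(R₁R₂, z)^t = j(R₂, z)^t · (j(R₁R₂, z) / j(R₂, z))^t` for the principal branch. Since `c₂ ≥ 0`
and the lower-left entry of `R₁R₂` is `≥ 0`, both `j(R₂, z)` and `j(R₁R₂, z)` lie in the closed
half-plane of `z`, and off the cut neither lies on `(−∞, 0]`; so their arguments differ by less
than `π`, and the arguments of the two factors add up without wrapping around.
-/

namespace Complex

theorem arg_div_eq_sub_arg {x y : ℂ} (hx : x ≠ 0) (hy : y ≠ 0)
    (h : arg x - arg y ∈ Set.Ioc (-Real.pi) Real.pi) : arg (x / y) = arg x - arg y := by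
  rw [← arg_coe_angle_toReal_eq_arg, arg_div_coe_angle hx hy, ← Real.Angle.coe_sub,
    Real.Angle.toReal_coe_eq_self_iff_mem_Ioc]
  exact h

theorem mul_cpow_of_arg_add_mem_Ioc {x y : ℂ} (hx : x ≠ 0) (hy : y ≠ 0)
    (h : arg x + arg y ∈ Set.Ioc (-Real.pi) Real.pi) (t : ℂ) :
    (x * y) ^ t = x ^ t * y ^ t := by
  rw [cpow_def_of_ne_zero (mul_ne_zero hx hy), cpow_def_of_ne_zero hx, cpow_def_of_ne_zero hy,
    log_mul hx hy h, add_mul, exp_add]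

theorem arg_nonpos_of_im_nonpos {z : ℂ} (hz : z ∈ slitPlane) (him : z.im ≤ 0) : arg z ≤ 0 := by
  rcases him.lt_or_eq with hneg | hzero
  · exact (arg_neg_iff.mpr hneg).le
  · have hre : 0 < z.re := (mem_slitPlane_iff.mp hz).resolve_right (not_not.mpr hzero)
    exact (arg_eq_zero_iff.mpr ⟨hre.le, hzero⟩).le

theorem arg_sub_arg_mem_Ioo {u v : ℂ} (hu : u ∈ slitPlane) (hv : v ∈ slitPlane)
    (hside : (0 ≤ u.im ∧ 0 ≤ v.im) ∨ (u.im ≤ 0 ∧ v.im ≤ 0)) :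
    arg v - arg u ∈ Set.Ioo (-Real.pi) Real.pi := by
  have hu₁ := neg_pi_lt_arg u
  have hv₁ := neg_pi_lt_arg v
  have hu₂ := (arg_le_pi u).lt_of_ne (slitPlane_arg_ne_pi hu)
  have hv₂ := (arg_le_pi v).lt_of_ne (slitPlane_arg_ne_pi hv)
  rcases hside with ⟨hu₀, hv₀⟩ | ⟨hu₀, hv₀⟩
  · have := arg_nonneg_iff.mpr hu₀
    have := arg_nonneg_iff.mpr hv₀
    constructor <;> linarith
  · have := arg_nonpos_of_im_nonpos hu hu₀
    have := arg_nonpos_of_im_nonpos hv hv₀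
    constructor <;> linarith

theorem cpow_eq_cpow_mul_div_cpow {u v : ℂ} (hu : u ∈ slitPlane) (hv : v ∈ slitPlane)
    (hside : (0 ≤ u.im ∧ 0 ≤ v.im) ∨ (u.im ≤ 0 ∧ v.im ≤ 0)) (t : ℂ) :
    v ^ t = u ^ t * (v / u) ^ t := by
  have hu₀ := slitPlane_ne_zero hu
  have hv₀ := slitPlane_ne_zero hv
  have harg : arg (v / u) = arg v - arg u :=
    arg_div_eq_sub_arg hv₀ hu₀ (Set.Ioo_subset_Ioc_self (arg_sub_arg_mem_Ioo hu hv hside))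
  rw [← mul_cpow_of_arg_add_mem_Ioc hu₀ (div_ne_zero hv₀ hu₀), mul_div_cancel₀ v hu₀]
  rw [harg, add_sub_cancel]
  exact arg_mem_Ioc v

theorem intCast_abs_mul_cpow (m n : ℤ) (s : ℂ) :
    ((|m * n| : ℤ) : ℂ) ^ s = ((|m| : ℤ) : ℂ) ^ s * ((|n| : ℤ) : ℂ) ^ s := by
  have h := mul_cpow_ofReal_nonneg (a := ((|m| : ℤ) : ℝ)) (b := ((|n| : ℤ) : ℝ))
    (by positivity) (by positivity) s
  push_cast at h ⊢
  rw [abs_mul]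
  exact_mod_cast h

end Complex

theorem cut_mono : Monotone cut :=
  fun _ _ h _ hz => ⟨hz.1.trans h, hz.2⟩

theorem mem_slitPlane_of_not_mem_cut_bp {a b c d : ℤ} {r : ℝ} {z : ℂ}
    (hcd : 0 < c ∨ (c = 0 ∧ 0 < d)) (hz : z ∉ cut (bp a b c d r)) :
    (c : ℂ) * z + d ∈ Complex.slitPlane := by
  rw [Complex.mem_slitPlane_iff]
  simp only [Complex.add_re, Complex.mul_re, Complex.intCast_re, Complex.intCast_im, zero_mul,
    sub_zero, Complex.add_im, Complex.mul_im, add_zero]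
  by_cases him : z.im = 0
  · left
    have hre : bp a b c d r < z.re := lt_of_not_ge fun h => hz ⟨h, him⟩
    rcases hcd with hc | ⟨hc, hd⟩
    · have hc' : (0 : ℝ) < c := by exact_mod_cast hc
      rw [bp, if_neg hc.ne'] at hre
      have := (div_lt_iff₀ hc').mp ((le_max_right _ _).trans_lt hre)
      linarith
    · simp [hc, hd]
  · rcases hcd with hc | ⟨hc, hd⟩
    · exact Or.inr (mul_ne_zero (by exact_mod_cast hc.ne') him)
    · simp [hc, hd]

theorem linear_comp_mobius {K : Type*} [Field K] (p q a b c d z : K) (hu : c * z + d ≠ 0) :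
    p * ((a * z + b) / (c * z + d)) + q =
      ((p * a + q * c) * z + (p * b + q * d)) / (c * z + d) := by
  rw [eq_div_iff hu, add_mul, mul_assoc, div_mul_cancel₀ _ hu]
  ring

theorem mobius_comp {K : Type*} [Field K] (a₁ b₁ c₁ d₁ a₂ b₂ c₂ d₂ z : K)
    (hu : c₂ * z + d₂ ≠ 0) :
    (a₁ * ((a₂ * z + b₂) / (c₂ * z + d₂)) + b₁) /
        (c₁ * ((a₂ * z + b₂) / (c₂ * z + d₂)) + d₁) =
      ((a₁ * a₂ + b₁ * c₂) * z + (a₁ * b₂ + b₁ * d₂)) /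
        ((c₁ * a₂ + d₁ * c₂) * z + (c₁ * b₂ + d₁ * d₂)) := by
  rw [linear_comp_mobius _ _ _ _ _ _ _ hu, linear_comp_mobius _ _ _ _ _ _ _ hu,
    div_div_div_cancel_right₀ hu]

theorem intCast_mul_add_im_same_sign {c d c' d' : ℤ} (hc : 0 ≤ c) (hc' : 0 ≤ c') (z : ℂ) :
    (0 ≤ ((c : ℂ) * z + d).im ∧ 0 ≤ ((c' : ℂ) * z + d').im) ∨
      (((c : ℂ) * z + d).im ≤ 0 ∧ ((c' : ℂ) * z + d').im ≤ 0) := by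
  have hc : (0 : ℝ) ≤ c := by exact_mod_cast hc
  have hc' : (0 : ℝ) ≤ c' := by exact_mod_cast hc'
  simp only [Complex.add_im, Complex.mul_im, Complex.intCast_re, Complex.intCast_im, zero_mul,
    add_zero]
  rcases le_total 0 z.im with h | h
  · exact Or.inl ⟨mul_nonneg hc h, mul_nonneg hc' h⟩
  · exact Or.inr ⟨mul_nonpos_of_nonneg_of_nonpos hc h, mul_nonpos_of_nonneg_of_nonpos hc' h⟩

theorem slash_mul_general (s : ℂ) (r : ℝ) (φ : ℂ → ℂ)
    (a₁ b₁ c₁ d₁ a₂ b₂ c₂ d₂ : ℤ)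
    (hG₂ : 0 < c₂ ∨ (c₂ = 0 ∧ 0 < a₂ ∧ 0 < d₂))
    (hG₁₂ : 0 < c₁ * a₂ + d₁ * c₂ ∨
      (c₁ * a₂ + d₁ * c₂ = 0 ∧ 0 < a₁ * a₂ + b₁ * c₂ ∧ 0 < c₁ * b₂ + d₁ * d₂)) :
    ∀ z ∉ cut (max (bp a₂ b₂ c₂ d₂ (bp a₁ b₁ c₁ d₁ r))
        (bp (a₁ * a₂ + b₁ * c₂) (a₁ * b₂ + b₁ * d₂)
          (c₁ * a₂ + d₁ * c₂) (c₁ * b₂ + d₁ * d₂) r)),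
      slash s a₂ b₂ c₂ d₂ (slash s a₁ b₁ c₁ d₁ φ) z =
        slash s (a₁ * a₂ + b₁ * c₂) (a₁ * b₂ + b₁ * d₂)
          (c₁ * a₂ + d₁ * c₂) (c₁ * b₂ + d₁ * d₂) φ z := by
  intro z hz
  have hu := mem_slitPlane_of_not_mem_cut_bp (hG₂.imp_right fun h => ⟨h.1, h.2.2⟩)
    fun h => hz (cut_mono (le_max_left _ _) h)
  have hv := mem_slitPlane_of_not_mem_cut_bp (hG₁₂.imp_right fun h => ⟨h.1, h.2.2⟩)
    fun h => hz (cut_mono (le_max_right _ _) h)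
  have hside := intCast_mul_add_im_same_sign (d := d₂) (d' := c₁ * b₂ + d₁ * d₂)
    (hG₂.elim le_of_lt fun h => h.1.ge) (hG₁₂.elim le_of_lt fun h => h.1.ge) z
  have hdet : (a₁ * a₂ + b₁ * c₂) * (c₁ * b₂ + d₁ * d₂) -
      (a₁ * b₂ + b₁ * d₂) * (c₁ * a₂ + d₁ * c₂) = (a₂ * d₂ - b₂ * c₂) * (a₁ * d₁ - b₁ * c₁) := by
    ring
  simp only [slash]
  rw [Complex.cpow_eq_cpow_mul_div_cpow hu hv hside, hdet, Complex.intCast_abs_mul_cpow]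
  push_cast
  rw [mobius_comp _ _ _ _ _ _ _ _ _ (Complex.slitPlane_ne_zero hu),
    linear_comp_mobius _ _ _ _ _ _ _ (Complex.slitPlane_ne_zero hu)]
  ring

/-- Proposition 3.4: `(φ|ₛR₁)|ₛR₂ = φ|ₛ(R₁R₂)` on the common domain of
holomorphy, under the hypotheses that `R₁, R₂, R₁R₂` lie in `𝒢` and all three
pairs belong to the domain `𝒟𝒮` of the slash operation. -/
theorem slash_mul (s : ℂ) (r : ℝ) (φ : ℂ → ℂ)
    (a₁ b₁ c₁ d₁ a₂ b₂ c₂ d₂ : ℤ)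
    (hφ : DifferentiableOn ℂ φ (cut r)ᶜ)
    (hdet₁ : a₁ * d₁ - b₁ * c₁ ≠ 0) (hdet₂ : a₂ * d₂ - b₂ * c₂ ≠ 0)
    (hG₁ : 0 < c₁ ∨ (c₁ = 0 ∧ 0 < a₁ ∧ 0 < d₁))
    (hG₂ : 0 < c₂ ∨ (c₂ = 0 ∧ 0 < a₂ ∧ 0 < d₂))
    (hG₁₂ : 0 < c₁ * a₂ + d₁ * c₂ ∨
      (c₁ * a₂ + d₁ * c₂ = 0 ∧ 0 < a₁ * a₂ + b₁ * c₂ ∧ 0 < c₁ * b₂ + d₁ * d₂))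
    (h₁ : (c₁ : ℝ) * r < (a₁ : ℝ))
    (h₂ : (c₂ : ℝ) * bp a₁ b₁ c₁ d₁ r < (a₂ : ℝ))
    (h₁₂ : ((c₁ * a₂ + d₁ * c₂ : ℤ) : ℝ) * r < ((a₁ * a₂ + b₁ * c₂ : ℤ) : ℝ)) :
    ∀ z ∉ cut (max (bp a₂ b₂ c₂ d₂ (bp a₁ b₁ c₁ d₁ r))
        (bp (a₁ * a₂ + b₁ * c₂) (a₁ * b₂ + b₁ * d₂)
          (c₁ * a₂ + d₁ * c₂) (c₁ * b₂ + d₁ * d₂) r)),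
      slash s a₂ b₂ c₂ d₂ (slash s a₁ b₁ c₁ d₁ φ) z =
        slash s (a₁ * a₂ + b₁ * c₂) (a₁ * b₂ + b₁ * d₂)
          (c₁ * a₂ + d₁ * c₂) (c₁ * b₂ + d₁ * d₂) φ z :=
  slash_mul_general s r φ a₁ b₁ c₁ d₁ a₂ b₂ c₂ d₂ hG₂ hG₁₂
end

section
/- Let μ ∈ ℕ, let A, B be invertible complex μ×μ matrices with (BA⁻¹)² = I, let λ ∈ {1, −1} and s ∈ ℂ. If Φ : ℂ ∖ (−∞, 0] → ℂ^μ is holomorphic and satisfies Φ(z) − A·Φ(z + 1) = λ⁻¹ z^{−2s} B·Φ(1 + 1/z) for all z ∈ ℂ ∖ (−∞, 0], then Φ(z) = λ z^{−2s} BA⁻¹·Φ(1/z) for all z ∈ ℂ ∖ (−∞, 0]. -/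
/-- Proposition 4.1: if `A, B` are invertible complex `μ×μ` matrices with
`(BA⁻¹)² = I`, `λ = ±1`, and `Φ : ℂ ∖ (−∞, 0] → ℂ^μ` is a holomorphic solution
of `Φ(z) − A Φ(z+1) = λ⁻¹ z^{−2s} B Φ(1 + 1/z)`, then
`Φ(z) = λ z^{−2s} B A⁻¹ Φ(1/z)` on `ℂ ∖ (−∞, 0]`. -/
theorem two_term_equation (μ : ℕ) (A B : Matrix (Fin μ) (Fin μ) ℂ)
    (hA : IsUnit A) (hB : IsUnit B)
    (hBA : (B * A⁻¹) ^ 2 = 1)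
    (lam : ℂ) (hlam : lam = 1 ∨ lam = -1) (s : ℂ)
    (Φ : ℂ → Fin μ → ℂ)
    (hol : ∀ j : Fin μ, DifferentiableOn ℂ (fun z => Φ z j) (cut 0)ᶜ)
    (heq : ∀ z ∉ cut 0,
      Φ z - A.mulVec (Φ (z + 1)) =
        lam⁻¹ • (z ^ (-(2 * s)) • B.mulVec (Φ (1 + 1 / z)))) :
    ∀ z ∉ cut 0,
      Φ z = lam • (z ^ (-(2 * s)) • (B * A⁻¹).mulVec (Φ (1 / z))) := by
  intro z hz
  have hz0 : z ≠ 0 := by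
    intro h; exact hz (by simp [cut, h])
  have hzarg : z.arg ≠ Real.pi := by
    intro h
    obtain ⟨h1, h2⟩ := Complex.arg_eq_pi_iff.mp h
    exact hz ⟨le_of_lt h1, h2⟩
  have hns : Complex.normSq z ≠ 0 := by simpa [Complex.normSq_eq_zero] using hz0
  have hinv : 1 / z ∉ cut 0 := by
    rintro ⟨h1, h2⟩
    rw [one_div] at h1 h2
    rw [Complex.inv_im] at h2
    have him : z.im = 0 := by
      rcases div_eq_zero_iff.mp h2 with h | h
      · linarith [neg_eq_zero.mp h]
      · exact absurd h hns
    have hre : 0 < z.re := by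
      by_contra hc
      exact hz ⟨le_of_not_gt hc, him⟩
    rw [Complex.inv_re] at h1
    have : 0 < z.re / Complex.normSq z :=
      div_pos hre (lt_of_le_of_ne (Complex.normSq_nonneg z) (Ne.symm hns))
    linarith
  -- scalar facts
  have hlam2 : lam * lam = 1 := by rcases hlam with h | h <;> simp [h]
  have hlaminv : lam⁻¹ = lam := by rcases hlam with h | h <;> norm_num [h]
  have hzpow : z ^ (-(2 * s)) * z ^ (2 * s) = 1 := by
    rw [Complex.cpow_neg]
    exact inv_mul_cancel₀ (by
      simp [Complex.cpow_eq_zero_iff, hz0])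
  have hcpow : (1 / z) ^ (-(2 * s)) = z ^ (2 * s) := by
    rw [one_div, Complex.inv_cpow _ _ hzarg, Complex.cpow_neg, inv_inv]
  -- matrix facts
  have hAinv : A⁻¹ * A = 1 := Matrix.nonsing_inv_mul A ((Matrix.isUnit_iff_isUnit_det A).mp hA)
  have hBAA : B * A⁻¹ * A = B := by rw [Matrix.mul_assoc, hAinv, Matrix.mul_one]
  have hBAB : B * A⁻¹ * B = A := by
    have h := hBA
    rw [sq] at h
    calc B * A⁻¹ * B = B * A⁻¹ * B * 1 := by rw [Matrix.mul_one]
      _ = B * A⁻¹ * B * (A⁻¹ * A) := by rw [hAinv]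
      _ = B * A⁻¹ * (B * A⁻¹) * A := by noncomm_ring
      _ = A := by rw [h, Matrix.one_mul]
  -- the functional equation at 1/z
  have h2 := heq (1 / z) hinv
  rw [one_div_one_div, hcpow, hlaminv] at h2
  have hΦinv : Φ (1 / z) =
      lam • (z ^ (2 * s) • B.mulVec (Φ (1 + z))) + A.mulVec (Φ (1 / z + 1)) :=
    sub_eq_iff_eq_add.mp h2
  -- the functional equation at z
  have h1 := heq z hz
  rw [hlaminv] at h1
  have hΦz : Φ z =
      lam • (z ^ (-(2 * s)) • B.mulVec (Φ (1 + 1 / z))) + A.mulVec (Φ (z + 1)) :=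
    sub_eq_iff_eq_add.mp h1
  rw [hΦz, hΦinv, Matrix.mulVec_add, Matrix.mulVec_smul, Matrix.mulVec_smul,
    Matrix.mulVec_mulVec, Matrix.mulVec_mulVec, hBAA, hBAB,
    add_comm (1 : ℂ) z, add_comm (1 / z) 1]
  simp only [smul_add, smul_smul]
  have hsc : lam * z ^ (-(2 * s)) * lam * z ^ (2 * s) = 1 := by
    rw [show lam * z ^ (-(2 * s)) * lam * z ^ (2 * s) =
      lam * lam * (z ^ (-(2 * s)) * z ^ (2 * s)) from by ring, hlam2, hzpow, one_mul]
  rw [show lam * (z ^ (-(2 * s)) * (lam * z ^ (2 * s))) = 1 from by linear_combination hsc,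
    one_smul, add_comm]
end

section
/- For any two partitions P₁ and P₂ of the same x ∈ ℚ⁺, the difference m(P₁) − m(P₂) lies in the right ideal ℐ := (I − T − MTM)·ℤ[Mat_*(2, ℤ)] of ℤ[Mat_*(2, ℤ)]. Moreover, if s ∈ ℂ and φ is a solution of the Lewis equation φ(z) = φ(z+1) + λ z^{−2s} φ(1 + 1/z) on ℂ ∖ (−∞, 0] with λ = ±1, then φ|_s(m(P₁) − m(P₂)) is well defined and equal to 0. -/
abbrev Mat2 := Matrix (Fin 2) (Fin 2) ℤ

/-- The generator `A ↦ A` of `ℤ[Mat(2, ℤ)]` (multiplication induced by matrix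
multiplication). -/
noncomputable def sing (A : Mat2) : MonoidAlgebra ℤ Mat2 :=
  MonoidAlgebra.single A 1

/-- `T = (1, 1; 0, 1)`. -/
def Tm : Mat2 := !![1, 1; 0, 1]

/-- `M = (0, 1; 1, 0)`. -/
def Mm : Mat2 := !![0, 1; 1, 0]

open Complex Real

set_option linter.unusedVariables false


lemma notcut {r : ℝ} {z : ℂ} : z ∉ cut r ↔ r < z.re ∨ z.im ≠ 0 := by
  constructor
  · intro h
    by_cases him : z.im = 0
    · exact Or.inl (not_le.1 fun hle => h ⟨hle, him⟩)
    · exact Or.inr him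
  · rintro (h | h) ⟨h1, h2⟩
    · exact absurd h1 (not_le.2 h)
    · exact h h2

lemma arg_bounds_pos {w : ℂ} (h : 0 < w.im) : 0 < arg w ∧ arg w < π := by
  constructor
  · rcases lt_or_eq_of_le (arg_nonneg_iff.2 h.le) with h' | h'
    · exact h'
    · exfalso; have := (arg_eq_zero_iff.1 h'.symm).2; linarith
  · rcases lt_or_eq_of_le (arg_le_pi w) with h' | h'
    · exact h'
    · exfalso; have := (arg_eq_pi_iff.1 h').2; linarith

lemma arg_bounds_neg {w : ℂ} (h : w.im < 0) : -π < arg w ∧ arg w < 0 :=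
  ⟨neg_pi_lt_arg w, arg_neg_iff.2 h⟩

lemma arg_ne_pi_of_im_ne {w : ℂ} (h : w.im ≠ 0) : arg w ≠ π := by
  intro h'; exact h (arg_eq_pi_iff.1 h').2

lemma branch_log_mul {v t : ℂ}
    (h : (0 < v.im ∧ 0 < t.im ∧ 0 < (v*t).im) ∨ (v.im < 0 ∧ t.im < 0 ∧ (v*t).im < 0) ∨
         (v.im * t.im < 0) ∨ (v.im = 0 ∧ 0 < v.re ∧ t.im = 0 ∧ 0 < t.re)) :
    Complex.log (v * t) = Complex.log v + Complex.log t := by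
  have hv : v ≠ 0 := by
    rcases h with ⟨h1,_,_⟩|⟨h1,_,_⟩|h1|⟨h1,h2,_,_⟩
    · exact fun hh => by simp [hh] at h1
    · exact fun hh => by simp [hh] at h1
    · exact fun hh => by simp [hh] at h1
    · exact fun hh => by simp [hh] at h2
  have ht : t ≠ 0 := by
    rcases h with ⟨_,h1,_⟩|⟨_,h1,_⟩|h1|⟨_,_,h1,h2⟩
    · exact fun hh => by simp [hh] at h1
    · exact fun hh => by simp [hh] at h1
    · exact fun hh => by simp [hh] at h1
    · exact fun hh => by simp [hh] at h2
  rcases h with ⟨h1,h2,h3⟩|⟨h1,h2,h3⟩|h1|⟨h1,h2,h3,h4⟩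
  · -- both upper, product upper
    have hvi : v.im ≠ 0 := ne_of_gt h1
    have harginv : arg v⁻¹ = -arg v := by
      rw [Complex.arg_inv]; rw [if_neg (arg_ne_pi_of_im_ne hvi)]
    have hb1 := arg_bounds_pos h1
    have hb3 := arg_bounds_pos h3
    have key : Complex.log ((v*t) * v⁻¹) = Complex.log (v*t) + Complex.log v⁻¹ := by
      apply Complex.log_mul (mul_ne_zero hv ht) (inv_ne_zero hv)
      constructor
      · rw [harginv]; linarith [hb1.2]
      · rw [harginv]; linarith [hb3.2, hb1.1]
    have hvt : (v*t) * v⁻¹ = t := by field_simp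
    rw [hvt] at key
    rw [Complex.log_inv v (arg_ne_pi_of_im_ne hvi)] at key
    rw [key]; ring
  · have hvi : v.im ≠ 0 := ne_of_lt h1
    have harginv : arg v⁻¹ = -arg v := by
      rw [Complex.arg_inv]; rw [if_neg (arg_ne_pi_of_im_ne hvi)]
    have hb1 := arg_bounds_neg h1
    have hb3 := arg_bounds_neg h3
    have key : Complex.log ((v*t) * v⁻¹) = Complex.log (v*t) + Complex.log v⁻¹ := by
      apply Complex.log_mul (mul_ne_zero hv ht) (inv_ne_zero hv)
      constructor
      · rw [harginv]; linarith [hb3.1, hb1.2]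
      · rw [harginv]; linarith [hb1.1, hb3.2]
    have hvt : (v*t) * v⁻¹ = t := by field_simp
    rw [hvt] at key
    rw [Complex.log_inv v (arg_ne_pi_of_im_ne hvi)] at key
    rw [key]; ring
  · -- opposite signs
    apply Complex.log_mul hv ht
    rcases mul_neg_iff.1 h1 with ⟨ha, hb⟩ | ⟨ha, hb⟩
    · have b1 := arg_bounds_pos ha
      have b2 := arg_bounds_neg hb
      exact ⟨by linarith [b1.1, b2.1], by linarith [b1.2, b2.2]⟩
    · have b1 := arg_bounds_neg ha
      have b2 := arg_bounds_pos hb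
      exact ⟨by linarith [b1.1, b2.1], by linarith [b1.2, b2.2]⟩
  · -- both positive reals
    apply Complex.log_mul hv ht
    have a1 : arg v = 0 := arg_eq_zero_iff.2 ⟨h2.le, h1⟩
    have a2 : arg t = 0 := arg_eq_zero_iff.2 ⟨h4.le, h3⟩
    rw [a1, a2]
    constructor <;> simp [Real.pi_pos, Real.pi_nonneg]

lemma mul_cpow_branch {v t : ℂ} (s' : ℂ)
    (h : (0 < v.im ∧ 0 < t.im ∧ 0 < (v*t).im) ∨ (v.im < 0 ∧ t.im < 0 ∧ (v*t).im < 0) ∨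
         (v.im * t.im < 0) ∨ (v.im = 0 ∧ 0 < v.re ∧ t.im = 0 ∧ 0 < t.re)) :
    (v * t) ^ s' = v ^ s' * t ^ s' := by
  have hv : v ≠ 0 := by
    rcases h with ⟨h1,_,_⟩|⟨h1,_,_⟩|h1|⟨h1,h2,_,_⟩
    · exact fun hh => by simp [hh] at h1
    · exact fun hh => by simp [hh] at h1
    · exact fun hh => by simp [hh] at h1
    · exact fun hh => by simp [hh] at h2
  have ht : t ≠ 0 := by
    rcases h with ⟨_,h1,_⟩|⟨_,h1,_⟩|h1|⟨_,_,h1,h2⟩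
    · exact fun hh => by simp [hh] at h1
    · exact fun hh => by simp [hh] at h1
    · exact fun hh => by simp [hh] at h1
    · exact fun hh => by simp [hh] at h2
  rw [cpow_def_of_ne_zero (mul_ne_zero hv ht), cpow_def_of_ne_zero hv, cpow_def_of_ne_zero ht,
    branch_log_mul h, add_mul, Complex.exp_add]

lemma dom_cases {w : ℂ} (hw : w ∉ cut 0) : w.im ≠ 0 ∨ (w.im = 0 ∧ 0 < w.re) := by
  rcases notcut.1 hw with h | h
  · by_cases him : w.im = 0
    · exact Or.inr ⟨him, h⟩
    · exact Or.inl him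
  · exact Or.inl h

lemma dom_ne_zero {w : ℂ} (hw : w ∉ cut 0) : w ≠ 0 := by
  rcases dom_cases hw with h | ⟨h1, h2⟩
  · exact fun hh => h (by simp [hh])
  · exact fun hh => by simp [hh] at h2

lemma dom_inv {w : ℂ} (hw : w ∉ cut 0) : w⁻¹ ∉ cut 0 := by
  have hw0 := dom_ne_zero hw
  have hns : 0 < Complex.normSq w := Complex.normSq_pos.2 hw0
  rcases dom_cases hw with h | ⟨h1, h2⟩
  · apply notcut.2; right
    rw [Complex.inv_im]
    intro hh
    rcases div_eq_zero_iff.1 hh with hh1 | hh1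
    · exact h (by linarith [neg_eq_zero.1 hh1])
    · linarith
  · apply notcut.2; left
    rw [Complex.inv_re]
    positivity

lemma dom_arg_ne_pi {w : ℂ} (hw : w ∉ cut 0) : w.arg ≠ Real.pi := by
  intro hh
  rcases Complex.arg_eq_pi_iff.1 hh with ⟨h1, h2⟩
  rcases notcut.1 hw with h | h
  · linarith
  · exact h h2

section Lewis

variable {s lam : ℂ} {φ : ℂ → ℂ}

lemma lewis_sym (hlam : lam = 1 ∨ lam = -1)
    (hLewis : ∀ z ∉ cut 0, φ z = φ (z + 1) + lam * z ^ (-(2 * s)) * φ (1 + 1 / z))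
    {ζ : ℂ} (hζ : ζ ∉ cut 0) : φ ζ = lam * ζ ^ (-(2 * s)) * φ ζ⁻¹ := by
  have hζ0 : ζ ≠ 0 := dom_ne_zero hζ
  have hinv : ζ⁻¹ ∉ cut 0 := dom_inv hζ
  have L1 := hLewis ζ hζ
  have L2 := hLewis ζ⁻¹ hinv
  have e1 : (1 : ℂ) + 1 / ζ⁻¹ = 1 + ζ := by field_simp
  have e2 : (ζ⁻¹ : ℂ) ^ (-(2 * s)) = ζ ^ (2 * s) := by
    rw [Complex.inv_cpow _ _ (dom_arg_ne_pi hζ), Complex.cpow_neg, inv_inv]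
  have hll : lam * lam = 1 := by rcases hlam with h | h <;> simp [h]
  have hcc : ζ ^ (-(2 * s)) * ζ ^ (2 * s) = 1 := by
    rw [← Complex.cpow_add _ _ hζ0]; simp
  rw [e1] at L2
  have calc1 : lam * ζ ^ (-(2 * s)) * φ ζ⁻¹ = φ ζ := by
    rw [L2, e2]
    have : lam * ζ ^ (-(2 * s)) * (φ (ζ⁻¹ + 1) + lam * ζ ^ (2 * s) * φ (1 + ζ)) =
        lam * ζ ^ (-(2 * s)) * φ (ζ⁻¹ + 1) +
          (lam * lam) * (ζ ^ (-(2 * s)) * ζ ^ (2 * s)) * φ (1 + ζ) := by ring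
    rw [this, hll, hcc]
    rw [show ζ⁻¹ + 1 = 1 + 1 / ζ by rw [one_div]; ring, show (1 : ℂ) + ζ = ζ + 1 by ring]
    rw [L1]; ring
  exact calc1.symm

lemma lewis_star (hlam : lam = 1 ∨ lam = -1)
    (hLewis : ∀ z ∉ cut 0, φ z = φ (z + 1) + lam * z ^ (-(2 * s)) * φ (1 + 1 / z))
    {w : ℂ} (hw : w ∉ cut 0) :
    φ w = φ (w + 1) + (w + 1) ^ (-(2 * s)) * φ (w / (w + 1)) := by
  have hw0 : w ≠ 0 := dom_ne_zero hw
  have hns : 0 < Complex.normSq w := Complex.normSq_pos.2 hw0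
  have hw1 : w + 1 ≠ 0 := by
    rcases dom_cases hw with h | ⟨h1, h2⟩
    · intro hh
      have : (w + 1).im = 0 := by rw [hh]; simp
      simp only [Complex.add_im, Complex.one_im, add_zero] at this
      exact h this
    · intro hh
      have : (w + 1).re = 0 := by rw [hh]; simp
      simp only [Complex.add_re, Complex.one_re] at this
      linarith
  set ζ : ℂ := (w + 1) / w with hζdef
  have hζim : ζ.im = -w.im / Complex.normSq w := by
    rw [hζdef, Complex.div_im]
    simp only [Complex.add_im, Complex.add_re, Complex.one_im, Complex.one_re, add_zero]
    ring
  have hζdom : ζ ∉ cut 0 := by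
    rcases dom_cases hw with h | ⟨h1, h2⟩
    · apply notcut.2; right
      rw [hζim]
      intro hh
      rcases div_eq_zero_iff.1 hh with hh1 | hh1
      · exact h (by linarith [neg_eq_zero.1 hh1])
      · linarith
    · apply notcut.2; left
      have hre : ζ.re = (w.re + 1) * w.re / Complex.normSq w := by
        rw [hζdef, Complex.div_re]
        simp only [Complex.add_im, Complex.add_re, Complex.one_im, Complex.one_re, add_zero, h1]
        ring
      rw [hre]
      positivity
  have hζ0 : ζ ≠ 0 := dom_ne_zero hζdom
  have hsym := lewis_sym hlam hLewis hζdom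
  have hinvζ : ζ⁻¹ = w / (w + 1) := by rw [hζdef, inv_div]
  have L1 := hLewis w hw
  have e1 : (1 : ℂ) + 1 / w = ζ := by rw [hζdef]; field_simp
  have hmul : w * ζ = w + 1 := by rw [hζdef]; field_simp
  have hll : lam * lam = 1 := by rcases hlam with h | h <;> simp [h]
  have hbranch : (w + 1) ^ (-(2 * s)) = w ^ (-(2 * s)) * ζ ^ (-(2 * s)) := by
    rw [← hmul]
    apply mul_cpow_branch
    rcases dom_cases hw with h | ⟨h1, h2⟩
    · right; right; left
      rw [hζim]
      have : w.im * (-w.im / Complex.normSq w) = -(w.im ^ 2) / Complex.normSq w := by ring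
      rw [this]
      apply div_neg_of_neg_of_pos _ hns
      have h2 : (0:ℝ) < w.im ^ 2 := by positivity
      linarith
    · right; right; right
      refine ⟨h1, h2, ?_, ?_⟩
      · rw [hζim, h1]; simp
      · have hre : ζ.re = (w.re + 1) * w.re / Complex.normSq w := by
          rw [hζdef, Complex.div_re]
          simp only [Complex.add_im, Complex.add_re, Complex.one_im, Complex.one_re, add_zero, h1]
          ring
        rw [hre]; positivity
  calc φ w = φ (w + 1) + lam * w ^ (-(2 * s)) * φ ζ := by rw [L1, e1]
    _ = φ (w + 1) + lam * w ^ (-(2 * s)) * (lam * ζ ^ (-(2 * s)) * φ ζ⁻¹) := by rw [← hsym]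
    _ = φ (w + 1) + (lam * lam) * (w ^ (-(2 * s)) * ζ ^ (-(2 * s))) * φ (w / (w + 1)) := by
        rw [hinvζ]; ring
    _ = φ (w + 1) + (w + 1) ^ (-(2 * s)) * φ (w / (w + 1)) := by rw [hll, hbranch]; ring

end Lewis


lemma ne_zero_of_im_ne {x : ℂ} (h : x.im ≠ 0) : x ≠ 0 := fun hh => h (by simp [hh])

lemma ne_zero_of_re_pos {x : ℂ} (h : 0 < x.re) : x ≠ 0 := fun hh => by simp [hh] at h

section Slash3

variable {s lam : ℂ} {φ : ℂ → ℂ}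

lemma slash_three (hlam : lam = 1 ∨ lam = -1)
    (hLewis : ∀ z ∉ cut 0, φ z = φ (z + 1) + lam * z ^ (-(2 * s)) * φ (1 + 1 / z))
    (a b c d : ℤ) (hdet : a * d - b * c = 1) (ha : 0 < a) (hc : 0 ≤ c)
    (hc0 : c = 0 → d = 1) (z : ℂ)
    (hz : z.im ≠ 0 ∨ (z.im = 0 ∧ 0 < (a : ℝ) * z.re + b ∧ 0 < (c : ℝ) * z.re + d)) :
    slash s a b c d φ z =
      slash s a b (a + c) (b + d) φ z + slash s (a + c) (b + d) c d φ z := by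
  have hdet2 : a * (b + d) - b * (a + c) = 1 := by linear_combination hdet
  have hdet3 : (a + c) * d - (b + d) * c = 1 := by linear_combination hdet
  set u : ℂ := (a : ℂ) * z + b with hu
  set v : ℂ := (c : ℂ) * z + d with hv
  have huim : u.im = (a : ℝ) * z.im := by simp [hu]
  have hure : u.re = (a : ℝ) * z.re + b := by simp [hu]
  have hvim : v.im = (c : ℝ) * z.im := by simp [hv]
  have hvre : v.re = (c : ℝ) * z.re + d := by simp [hv]
  have hdr : (a : ℝ) * d - (b : ℝ) * c = 1 := by exact_mod_cast hdet
  have har : (0:ℝ) < (a:ℝ) := by exact_mod_cast ha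
  have hcr : (0:ℝ) ≤ (c:ℝ) := by exact_mod_cast hc
  have hvne : v ≠ 0 := by
    rcases hz with hzi | ⟨hzi, hpu, hpv⟩
    · rcases lt_or_eq_of_le hc with hcpos | hceq
      · have : (0:ℝ) < (c:ℝ) := by exact_mod_cast hcpos
        exact ne_zero_of_im_ne (by rw [hvim]; exact mul_ne_zero this.ne' hzi)
      · have hd := hc0 hceq.symm
        apply _root_.ne_zero_of_re_pos
        rw [hvre, ← hceq, hd]; norm_num
    · exact _root_.ne_zero_of_re_pos (by rw [hvre]; exact hpv)
  have hns : 0 < Complex.normSq v := Complex.normSq_pos.2 hvne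
  set w : ℂ := u / v with hw
  have hwim : w.im = z.im / Complex.normSq v := by
    rw [hw, Complex.div_im, huim, hure, hvim, hvre, div_sub_div_same]
    congr 1
    linear_combination z.im * hdr
  have hVv : v * (w + 1) = u + v := by
    rw [hw]; field_simp
  have hV : ((a + c : ℤ) : ℂ) * z + ((b + d : ℤ) : ℂ) = u + v := by
    rw [hu, hv]; push_cast; ring
  have hVim : (u + v).im = ((a : ℝ) + c) * z.im := by
    rw [Complex.add_im, huim, hvim]; ring
  have hVre : (u + v).re = ((a : ℝ) * z.re + b) + ((c : ℝ) * z.re + d) := by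
    rw [Complex.add_re, hure, hvre]
  have hwdom : w ∉ cut 0 := by
    rcases hz with hzi | ⟨hzi, hpu, hpv⟩
    · exact notcut.2 (Or.inr (by rw [hwim]; exact div_ne_zero hzi hns.ne'))
    · apply notcut.2; left
      have hdre : w.re = u.re * v.re / Complex.normSq v + u.im * v.im / Complex.normSq v :=
        Complex.div_re u v
      rw [hdre, huim, hure, hvim, hvre, hzi]
      simp only [mul_zero, zero_mul, zero_div, add_zero]
      exact div_pos (mul_pos hpu hpv) hns
  have hbranch : (u + v) ^ (-(2 * s)) = v ^ (-(2 * s)) * (w + 1) ^ (-(2 * s)) := by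
    rw [← hVv]
    rcases hz with hzi | ⟨hzi, hpu, hpv⟩
    · rcases lt_or_eq_of_le hc with hcpos | hceq
      · have hca : (0:ℝ) < (c:ℝ) := by exact_mod_cast hcpos
        have hw1im : (w + 1).im = z.im / Complex.normSq v := by
          rw [Complex.add_im, Complex.one_im, add_zero, hwim]
        have hVim2 : (v * (w + 1)).im = ((a : ℝ) + c) * z.im := by rw [hVv, hVim]
        apply mul_cpow_branch
        rcases hzi.lt_or_gt with hneg | hpos
        · right; left
          refine ⟨by rw [hvim]; exact mul_neg_of_pos_of_neg hca hneg, ?_, ?_⟩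
          · rw [hw1im]; exact div_neg_of_neg_of_pos hneg hns
          · rw [hVim2]; exact mul_neg_of_pos_of_neg (by linarith) hneg
        · left
          refine ⟨by rw [hvim]; exact mul_pos hca hpos, ?_, ?_⟩
          · rw [hw1im]; exact div_pos hpos hns
          · rw [hVim2]; exact mul_pos (by linarith) hpos
      · have hd := hc0 hceq.symm
        have hv1 : v = 1 := by rw [hv, ← hceq, hd]; push_cast; ring
        rw [hv1, one_mul, one_cpow, one_mul]
    · apply mul_cpow_branch
      right; right; right
      have hw1im : (w + 1).im = 0 := by
        rw [Complex.add_im, Complex.one_im, add_zero, hwim, hzi, zero_div]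
      refine ⟨by rw [hvim, hzi]; ring, by rw [hvre]; exact hpv, hw1im, ?_⟩
      have hdre : w.re = u.re * v.re / Complex.normSq v + u.im * v.im / Complex.normSq v :=
        Complex.div_re u v
      have hwrepos : 0 < w.re := by
        rw [hdre, huim, hure, hvim, hvre, hzi]
        simp only [mul_zero, zero_mul, zero_div, add_zero]
        exact div_pos (mul_pos hpu hpv) hns
      rw [Complex.add_re, Complex.one_re]
      linarith
  have hVne : u + v ≠ 0 := by
    rcases hz with hzi | ⟨hzi, hpu, hpv⟩
    · apply ne_zero_of_im_ne
      rw [hVim]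
      exact mul_ne_zero (by linarith) hzi
    · apply _root_.ne_zero_of_re_pos
      rw [hVre]
      linarith
  have hw1ne : w + 1 ≠ 0 := by
    intro hh
    rw [hh, mul_zero] at hVv
    exact hVne hVv.symm
  have hstar := lewis_star hlam hLewis hwdom
  simp only [slash]
  rw [hdet, hdet2, hdet3]
  simp only [abs_one, Int.cast_one, one_cpow, one_mul]
  rw [hV]
  have h1 : (u + v) / v = w + 1 := by
    rw [← hVv, mul_comm, mul_div_assoc, div_self hvne, mul_one]
  have h2 : u / (u + v) = w / (w + 1) := by
    rw [← hVv, hw]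
    field_simp
  rw [h1, h2, hbranch, hstar]
  ring

end Slash3

/-! ## Combinatorial part -/


structure Pa (x : ℚ) : Type where
  k : ℕ
  p : ℕ → ℤ
  q : ℕ → ℤ
  hcop : ∀ j ≤ k, Int.gcd (p j) (q j) = 1
  hqnn : ∀ j ≤ k, 0 ≤ q j
  hdet : ∀ j < k, p j * q (j + 1) - p (j + 1) * q j = 1
  hx : (p 0 : ℚ) / (q 0 : ℚ) = x
  hq : 0 < q 0
  hendp : p k = -1
  hendq : q k = 0

variable {x : ℚ}

lemma Pa.qpos (P : Pa x) : ∀ i < P.k, 0 < P.q i := by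
  intro i hik
  rcases Nat.eq_zero_or_pos i with rfl | hi
  · exact P.hq
  · by_contra h
    have hq0 : P.q i = 0 := le_antisymm (not_lt.1 h) (P.hqnn i hik.le)
    obtain ⟨i', rfl⟩ : ∃ i', i = i' + 1 := ⟨i - 1, by omega⟩
    have h1 := P.hdet i' (by omega)
    have h2 := P.hdet (i' + 1) hik
    rw [hq0] at h1 h2
    have hq1 : 0 ≤ P.q i' := P.hqnn i' (by omega)
    have hq2 : 0 ≤ P.q (i' + 2) := P.hqnn _ (by omega)
    have hb : P.q i' ∣ 1 := ⟨-(P.p (i' + 1)), by linear_combination -h1⟩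
    have hbq : P.q i' = 1 := by
      rcases Int.isUnit_iff.1 (isUnit_of_dvd_one hb) with h' | h' <;> omega
    rw [hbq] at h1
    have hp1 : P.p (i' + 1) = -1 := by linarith
    rw [hp1] at h2
    linarith

lemma Pa.kpos (P : Pa x) : 0 < P.k := by
  rcases Nat.eq_zero_or_pos P.k with h | h
  · have h0 := P.hendq
    rw [h] at h0
    exact absurd P.hq (by omega)
  · exact h

lemma Pa.linpos (P : Pa x) {t : ℝ} (ht : (x : ℝ) < t) :
    ∀ i ≤ P.k, 0 < (P.q i : ℝ) * t - (P.p i : ℝ) := by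
  intro i
  induction i with
  | zero =>
    intro _
    have hq0 : (0 : ℝ) < (P.q 0 : ℝ) := by exact_mod_cast P.hq
    have hx0 : ((P.p 0 : ℝ)) / ((P.q 0 : ℝ)) = (x : ℝ) := by exact_mod_cast P.hx
    have hp0 : (P.p 0 : ℝ) = (x : ℝ) * (P.q 0 : ℝ) := by
      field_simp at hx0
      linarith
    nlinarith
  | succ i ih =>
    intro hik
    have hqi : 0 < P.q i := P.qpos i (by omega)
    have hqir : (0 : ℝ) < (P.q i : ℝ) := by exact_mod_cast hqi
    have hd := P.hdet i (by omega)
    have hqn : (0 : ℝ) ≤ (P.q (i + 1) : ℝ) := by exact_mod_cast P.hqnn _ hik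
    have hprev := ih (by omega)
    have hdr : (P.p i : ℝ) * (P.q (i + 1) : ℝ) - (P.p (i + 1) : ℝ) * (P.q i : ℝ) = 1 := by
      exact_mod_cast hd
    have key : ((P.q (i + 1) : ℝ) * t - (P.p (i + 1) : ℝ)) * (P.q i : ℝ)
        = (P.q (i + 1) : ℝ) * ((P.q i : ℝ) * t - (P.p i : ℝ)) + 1 := by
      linear_combination hdr
    nlinarith [mul_nonneg hqn hprev.le]

/-- reducibility: some interior vertex is a mediant -/
def Red (P : Pa x) : Prop :=
  ∃ j, j + 2 ≤ P.k ∧ P.p (j + 1) = P.p j + P.p (j + 2) ∧ P.q (j + 1) = P.q j + P.q (j + 2)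

lemma Pa.convex (P : Pa x) (hirr : ¬Red P) :
    ∀ j, j + 2 ≤ P.k → 2 * P.q (j + 1) ≤ P.q j + P.q (j + 2) := by
  intro j hj
  have h1 := P.hdet j (by omega)
  have h2 := P.hdet (j + 1) (by omega)
  have hqm : 0 < P.q (j + 1) := P.qpos _ (by omega)
  have hkey : P.p (j + 1) * (P.q j + P.q (j + 2)) = (P.p j + P.p (j + 2)) * P.q (j + 1) := by
    linear_combination h2 - h1
  have hcp : IsCoprime (P.p (j + 1)) (P.q (j + 1)) :=
    Int.isCoprime_iff_gcd_eq_one.2 (P.hcop (j + 1) (by omega))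
  have hdvd : P.q (j + 1) ∣ (P.q j + P.q (j + 2)) := by
    apply hcp.symm.dvd_of_dvd_mul_left
    exact ⟨P.p j + P.p (j + 2), by linear_combination hkey⟩
  obtain ⟨n, hn⟩ := hdvd
  have hpn : P.p j + P.p (j + 2) = P.p (j + 1) * n := by
    have h3 : P.q (j + 1) * (P.p j + P.p (j + 2)) = P.q (j + 1) * (P.p (j + 1) * n) := by
      rw [hn] at hkey
      linear_combination -hkey
    exact mul_left_cancel₀ hqm.ne' h3
  have hqj : 0 < P.q j := P.qpos _ (by omega)
  have hq2 : 0 ≤ P.q (j + 2) := P.hqnn _ (by omega)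
  have hS : 0 < P.q j + P.q (j + 2) := by omega
  have hn1 : 1 ≤ n := by
    by_contra h
    push_neg at h
    have : P.q (j + 1) * n ≤ 0 := mul_nonpos_of_nonneg_of_nonpos hqm.le (by omega)
    linarith
  have hn2 : n ≠ 1 := by
    intro h1'
    exact hirr ⟨j, hj, by rw [hpn, h1', mul_one], by rw [hn, h1', mul_one]⟩
  have hn3 : 2 ≤ n := by omega
  nlinarith

lemma Pa.qdec (P : Pa x) (hirr : ¬Red P) : ∀ i, i + 1 ≤ P.k → P.q (i + 1) < P.q i := by
  have aux : ∀ m i, i + 1 + m = P.k → P.q i - P.q (i + 1) ≥ 1 := by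
    intro m
    induction m with
    | zero =>
      intro i hi
      have h1 : i + 1 = P.k := by omega
      have h2 : P.q (i + 1) = 0 := by rw [h1]; exact P.hendq
      have h3 : 0 < P.q i := P.qpos i (by omega)
      omega
    | succ m ih =>
      intro i hi
      have hconv := P.convex hirr i (by omega)
      have h5 := ih (i + 1) (by omega)
      rw [show i + 1 + 1 = i + 2 by omega] at h5
      omega
  intro i hi
  have := aux (P.k - i - 1) i (by omega)
  omega

lemma Pa.base (P : Pa x) : P.p 0 = x.num ∧ P.q 0 = x.den := by
  have hq0 : (0 : ℚ) < (P.q 0 : ℚ) := by exact_mod_cast P.hq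
  have hden : (0 : ℤ) < (x.den : ℤ) := by exact_mod_cast x.pos
  have hcross : P.p 0 * (x.den : ℤ) = x.num * P.q 0 := by
    have h1 : (P.p 0 : ℚ) / (P.q 0 : ℚ) = (x.num : ℚ) / (x.den : ℚ) := by
      rw [P.hx, Rat.num_div_den]
    rw [div_eq_div_iff hq0.ne' (by exact_mod_cast hden.ne')] at h1
    exact_mod_cast h1
  have hcp1 : IsCoprime (P.p 0) (P.q 0) := Int.isCoprime_iff_gcd_eq_one.2 (P.hcop 0 (by omega))
  have hcp2 : IsCoprime x.num (x.den : ℤ) := Int.isCoprime_iff_gcd_eq_one.2 x.reduced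
  have hd1 : P.q 0 ∣ (x.den : ℤ) := by
    apply hcp1.symm.dvd_of_dvd_mul_left
    exact ⟨x.num, by linear_combination hcross⟩
  have hd2 : (x.den : ℤ) ∣ P.q 0 := by
    apply hcp2.symm.dvd_of_dvd_mul_left
    exact ⟨P.p 0, by linear_combination -hcross⟩
  have hq : P.q 0 = (x.den : ℤ) := Int.dvd_antisymm (P.hq).le hden.le hd1 hd2
  refine ⟨?_, hq⟩
  rw [hq] at hcross
  exact mul_right_cancel₀ hden.ne' hcross

lemma irr_agree (P Q : Pa x) (hP : ¬Red P) (hQ : ¬Red Q) :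
    ∀ i, i ≤ P.k → i ≤ Q.k → P.p i = Q.p i ∧ P.q i = Q.q i := by
  intro i
  induction i with
  | zero =>
    intro _ _
    have b1 := P.base
    have b2 := Q.base
    exact ⟨b1.1.trans b2.1.symm, b1.2.trans b2.2.symm⟩
  | succ i ih =>
    intro hiP hiQ
    obtain ⟨hp, hq⟩ := ih (by omega) (by omega)
    have h1 := P.hdet i (by omega)
    have h2 := Q.hdet i (by omega)
    rw [← hp, ← hq] at h2
    have hd1 := P.qdec hP i (by omega)
    have hd2 := Q.qdec hQ i (by omega)
    rw [← hq] at hd2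
    have hn1 : 0 ≤ P.q (i + 1) := P.hqnn _ hiP
    have hn2 : 0 ≤ Q.q (i + 1) := Q.hqnn _ hiQ
    have hqi : 0 < P.q i := P.qpos i (by omega)
    have hcp : IsCoprime (P.p i) (P.q i) :=
      Int.isCoprime_iff_gcd_eq_one.2 (P.hcop i (by omega))
    have hdvd : P.q i ∣ (P.q (i + 1) - Q.q (i + 1)) := by
      apply hcp.symm.dvd_of_dvd_mul_left
      exact ⟨P.p (i + 1) - Q.p (i + 1), by linear_combination h1 - h2⟩
    have hzero : P.q (i + 1) - Q.q (i + 1) = 0 :=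
      Int.eq_zero_of_abs_lt_dvd hdvd (by rw [abs_lt]; omega)
    have hqq : P.q (i + 1) = Q.q (i + 1) := by omega
    have hpp : P.p (i + 1) = Q.p (i + 1) := by
      rw [hqq] at h1
      have h3 : (Q.p (i + 1) - P.p (i + 1)) * P.q i = 0 := by linear_combination h1 - h2
      rcases mul_eq_zero.1 h3 with h' | h'
      · omega
      · omega
    exact ⟨hpp, hqq⟩

lemma irr_keq (P Q : Pa x) (hP : ¬Red P) (hQ : ¬Red Q) : P.k = Q.k := by
  by_contra h
  rcases Nat.lt_or_ge P.k Q.k with hlt | hge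
  · have ha := (irr_agree P Q hP hQ P.k le_rfl hlt.le).2
    have hz := P.hendq
    have hpos := Q.qpos P.k hlt
    omega
  · have hlt2 : Q.k < P.k := by omega
    have ha := (irr_agree P Q hP hQ Q.k hlt2.le le_rfl).2
    have hz := Q.hendq
    have hpos := P.qpos Q.k hlt2
    omega

/-- removing a mediant vertex -/
def Pa.removeAt (P : Pa x) (j : ℕ) (hj : j + 2 ≤ P.k)
    (hmp : P.p (j + 1) = P.p j + P.p (j + 2))
    (hmq : P.q (j + 1) = P.q j + P.q (j + 2)) : Pa x where
  k := P.k - 1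
  p := fun i => if i ≤ j then P.p i else P.p (i + 1)
  q := fun i => if i ≤ j then P.q i else P.q (i + 1)
  hcop := by
    intro i hi
    by_cases h : i ≤ j
    · simpa [h] using P.hcop i (by omega)
    · simpa [h] using P.hcop (i + 1) (by omega)
  hqnn := by
    intro i hi
    by_cases h : i ≤ j
    · simpa [h] using P.hqnn i (by omega)
    · simpa [h] using P.hqnn (i + 1) (by omega)
  hdet := by
    intro i hi
    rcases lt_trichotomy i j with h | h | h
    · have e1 : i ≤ j := by omega
      have e2 : i + 1 ≤ j := by omega
      simpa [e1, e2] using P.hdet i (by omega)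
    · subst h
      have e1 : i ≤ i := le_rfl
      have e2 : ¬(i + 1 ≤ i) := by omega
      simp only [e1, if_pos, e2, if_neg, if_true, if_false]
      have h1 := P.hdet i (by omega)
      linear_combination h1 + P.q i * hmp - P.p i * hmq
    · have e1 : ¬(i ≤ j) := by omega
      have e2 : ¬(i + 1 ≤ j) := by omega
      simpa [e1, e2] using P.hdet (i + 1) (by omega)
  hx := by
    have e1 : 0 ≤ j := by omega
    simpa using P.hx
  hq := by simpa using P.hq
  hendp := by
    have e : ¬(P.k - 1 ≤ j) := by omega
    have e2 : P.k - 1 + 1 = P.k := by omega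
    simp only [e, if_neg, if_false, e2]
    exact P.hendp
  hendq := by
    have e : ¬(P.k - 1 ≤ j) := by omega
    have e2 : P.k - 1 + 1 = P.k := by omega
    simp only [e, if_neg, if_false, e2]
    exact P.hendq

/-- generic sum-removal identity -/
lemma sum_remove {M : Type*} [AddCommGroup M] (F G : ℕ → M) (k j : ℕ) (hj : j + 2 ≤ k)
    (hlt : ∀ i, i < j → G i = F i) (hGj : G j = G j)
    (hgt : ∀ i, j < i → i < k - 1 → G i = F (i + 1)) :
    (∑ i ∈ Finset.range k, F i) - (∑ i ∈ Finset.range (k - 1), G i)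
      = F j + F (j + 1) - G j := by
  have hF : ∑ i ∈ Finset.range k, F i
      = (∑ i ∈ Finset.range j, F i) + F j + F (j + 1) + ∑ i ∈ Finset.Ico (j + 2) k, F i := by
    rw [← Finset.sum_range_add_sum_Ico F hj, Finset.sum_range_succ, Finset.sum_range_succ]
  have hG : ∑ i ∈ Finset.range (k - 1), G i
      = (∑ i ∈ Finset.range j, G i) + G j + ∑ i ∈ Finset.Ico (j + 1) (k - 1), G i := by
    rw [← Finset.sum_range_add_sum_Ico G (show j + 1 ≤ k - 1 by omega), Finset.sum_range_succ]
  have hGF : ∑ i ∈ Finset.range j, G i = ∑ i ∈ Finset.range j, F i :=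
    Finset.sum_congr rfl fun i hi => hlt i (Finset.mem_range.1 hi)
  have hshift : ∑ i ∈ Finset.Ico (j + 1) (k - 1), G i = ∑ i ∈ Finset.Ico (j + 2) k, F i := by
    have h1 : ∑ i ∈ Finset.Ico (j + 1) (k - 1), F (i + 1)
        = ∑ i ∈ Finset.Ico (j + 1 + 1) (k - 1 + 1), F i := Finset.sum_Ico_add' F _ _ 1
    rw [show j + 1 + 1 = j + 2 by omega, show k - 1 + 1 = k by omega] at h1
    rw [← h1]
    exact Finset.sum_congr rfl fun i hi => by
      obtain ⟨hi1, hi2⟩ := Finset.mem_Ico.1 hi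
      exact hgt i (by omega) hi2
  rw [hF, hG, hGF, hshift]
  abel

noncomputable def mOf (P : Pa x) : MonoidAlgebra ℤ Mat2 :=
  ∑ i ∈ Finset.range P.k, sing !![P.q i, -P.p i; P.q (i + 1), -P.p (i + 1)]

noncomputable def sOf (s : ℂ) (φ : ℂ → ℂ) (P : Pa x) (z : ℂ) : ℂ :=
  ∑ i ∈ Finset.range P.k, slash s (P.q i) (-P.p i) (P.q (i + 1)) (-P.p (i + 1)) φ z

lemma sing_mul (A B : Mat2) : sing A * sing B = sing (A * B) := by
  rw [sing, sing, sing, MonoidAlgebra.single_mul_single, one_mul]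

lemma MTM_eq : Mm * Tm * Mm = !![1, 0; 1, 1] := by
  rw [Mm, Tm]
  rw [Matrix.mul_fin_two, Matrix.mul_fin_two]
  norm_num

section Step

variable {P : Pa x} {j : ℕ}

lemma m_remove (P : Pa x) (j : ℕ) (hj : j + 2 ≤ P.k)
    (hmp : P.p (j + 1) = P.p j + P.p (j + 2))
    (hmq : P.q (j + 1) = P.q j + P.q (j + 2)) :
    mOf P - mOf (P.removeAt j hj hmp hmq)
      = (sing Tm + sing (Mm * Tm * Mm) - 1) *
          sing !![P.q j, -P.p j; P.q (j + 2), -P.p (j + 2)] := by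
  set P' := P.removeAt j hj hmp hmq with hP'
  have hsum := sum_remove (fun i => sing !![P.q i, -P.p i; P.q (i + 1), -P.p (i + 1)])
    (fun i => sing !![P'.q i, -P'.p i; P'.q (i + 1), -P'.p (i + 1)]) P.k j hj
    (fun i hi => by
      have e1 : i ≤ j := by omega
      have e2 : i + 1 ≤ j := by omega
      show sing !![P'.q i, -P'.p i; P'.q (i + 1), -P'.p (i + 1)] = _
      simp only [hP', Pa.removeAt, e1, e2, if_pos]) rfl
    (fun i hi1 hi2 => by
      have e1 : ¬(i ≤ j) := by omega
      have e2 : ¬(i + 1 ≤ j) := by omega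
      show sing !![P'.q i, -P'.p i; P'.q (i + 1), -P'.p (i + 1)] = _
      simp only [hP', Pa.removeAt, e1, e2, if_neg, if_false])
  have hGj : (fun i => sing !![P'.q i, -P'.p i; P'.q (i + 1), -P'.p (i + 1)]) j
      = sing !![P.q j, -P.p j; P.q (j + 2), -P.p (j + 2)] := by
    have e1 : j ≤ j := le_rfl
    have e2 : ¬(j + 1 ≤ j) := by omega
    simp only [hP', Pa.removeAt, e1, e2, if_pos, if_neg, if_true, if_false]
  have hmOf : mOf P - mOf P' = _ := hsum
  beta_reduce at hGj
  rw [hGj] at hsum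
  have e1 : !![P.q j, -P.p j; P.q (j + 1), -P.p (j + 1)]
      = !![1, 0; 1, 1] * !![P.q j, -P.p j; P.q (j + 2), -P.p (j + 2)] := by
    rw [Matrix.mul_fin_two]
    ext i j'
    fin_cases i <;> fin_cases j' <;> simp <;> omega
  have e2 : !![P.q (j + 1), -P.p (j + 1); P.q (j + 2), -P.p (j + 2)]
      = Tm * !![P.q j, -P.p j; P.q (j + 2), -P.p (j + 2)] := by
    rw [Tm, Matrix.mul_fin_two]
    ext i j'
    fin_cases i <;> fin_cases j' <;> simp <;> omega
  have hk : P'.k = P.k - 1 := rfl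
  show mOf P - mOf P' = _
  rw [mOf, mOf, hk]
  rw [hsum]
  rw [show j + 1 + 1 = j + 2 by omega]
  rw [sub_mul, add_mul, one_mul, sing_mul, sing_mul, MTM_eq]
  rw [e1, e2]
  abel

end Step

lemma merged_det (P : Pa x) (j : ℕ) (hj : j + 2 ≤ P.k)
    (hmp : P.p (j + 1) = P.p j + P.p (j + 2))
    (hmq : P.q (j + 1) = P.q j + P.q (j + 2)) :
    P.q j * -P.p (j + 2) - -P.p j * P.q (j + 2) = 1 := by
  linear_combination (P.hdet j (by omega)) + P.q j * hmp - P.p j * hmq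

lemma s_remove {s lam : ℂ} {φ : ℂ → ℂ} (hlam : lam = 1 ∨ lam = -1)
    (hLewis : ∀ z ∉ cut 0, φ z = φ (z + 1) + lam * z ^ (-(2 * s)) * φ (1 + 1 / z))
    (P : Pa x) (j : ℕ) (hj : j + 2 ≤ P.k)
    (hmp : P.p (j + 1) = P.p j + P.p (j + 2))
    (hmq : P.q (j + 1) = P.q j + P.q (j + 2))
    {z : ℂ} (hz : z ∉ cut (x : ℝ)) :
    sOf s φ P z - sOf s φ (P.removeAt j hj hmp hmq) z = 0 := by
  set P' := P.removeAt j hj hmp hmq with hP'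
  have hsum := sum_remove (fun i => slash s (P.q i) (-P.p i) (P.q (i + 1)) (-P.p (i + 1)) φ z)
    (fun i => slash s (P'.q i) (-P'.p i) (P'.q (i + 1)) (-P'.p (i + 1)) φ z) P.k j hj
    (fun i hi => by
      have e1 : i ≤ j := by omega
      have e2 : i + 1 ≤ j := by omega
      show slash s (P'.q i) (-P'.p i) (P'.q (i + 1)) (-P'.p (i + 1)) φ z = _
      simp only [hP', Pa.removeAt, e1, e2, if_pos]) rfl
    (fun i hi1 hi2 => by
      have e1 : ¬(i ≤ j) := by omega
      have e2 : ¬(i + 1 ≤ j) := by omega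
      show slash s (P'.q i) (-P'.p i) (P'.q (i + 1)) (-P'.p (i + 1)) φ z = _
      simp only [hP', Pa.removeAt, e1, e2, if_neg, if_false])
  have hGj : (fun i => slash s (P'.q i) (-P'.p i) (P'.q (i + 1)) (-P'.p (i + 1)) φ z) j
      = slash s (P.q j) (-P.p j) (P.q (j + 2)) (-P.p (j + 2)) φ z := by
    have e1 : j ≤ j := le_rfl
    have e2 : ¬(j + 1 ≤ j) := by omega
    simp only [hP', Pa.removeAt, e1, e2, if_pos, if_neg, if_true, if_false]
  beta_reduce at hGj
  rw [hGj] at hsum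
  have hk : P'.k = P.k - 1 := rfl
  have hdetm := merged_det P j hj hmp hmq
  have ha : 0 < P.q j := P.qpos j (by omega)
  have hc : 0 ≤ P.q (j + 2) := P.hqnn _ hj
  have hc0 : P.q (j + 2) = 0 → -P.p (j + 2) = 1 := by
    intro h0
    have hk2 : j + 2 = P.k := by
      by_contra hne
      have := P.qpos (j + 2) (by omega)
      omega
    have := P.hendp
    rw [← hk2] at this
    omega
  have hz3 : z.im ≠ 0 ∨ (z.im = 0 ∧ 0 < (P.q j : ℝ) * z.re + ((-P.p j : ℤ) : ℝ) ∧
      0 < ((P.q (j + 2) : ℤ) : ℝ) * z.re + ((-P.p (j + 2) : ℤ) : ℝ)) := by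
    by_cases him : z.im = 0
    · right
      have hxre : (x : ℝ) < z.re := by
        rcases notcut.1 hz with h | h
        · exact h
        · exact absurd him h
      refine ⟨him, ?_, ?_⟩
      · have := P.linpos hxre j (by omega)
        push_cast
        linarith
      · have := P.linpos hxre (j + 2) hj
        push_cast
        linarith
    · exact Or.inl him
  have h3 := slash_three hlam hLewis (P.q j) (-P.p j) (P.q (j + 2)) (-P.p (j + 2))
    hdetm ha hc hc0 z hz3
  show sOf s φ P z - sOf s φ P' z = 0
  rw [sOf, sOf, hk, hsum]
  rw [show j + 1 + 1 = j + 2 by omega]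
  rw [show P.q j + P.q (j + 2) = P.q (j + 1) by omega,
    show -P.p j + -P.p (j + 2) = -P.p (j + 1) by omega] at h3
  linear_combination -h3

lemma main (x : ℚ) (s lam : ℂ) (hlam : lam = 1 ∨ lam = -1) (φ : ℂ → ℂ)
    (hLewis : ∀ z ∉ cut 0, φ z = φ (z + 1) + lam * z ^ (-(2 * s)) * φ (1 + 1 / z)) :
    ∀ n (P Q : Pa x), P.k + Q.k ≤ n →
      (∃ R : MonoidAlgebra ℤ Mat2, (∀ A ∈ R.coeff.support, A.det ≠ 0) ∧
        mOf P - mOf Q = (1 - sing Tm - sing (Mm * Tm * Mm)) * R) ∧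
      (∀ z ∉ cut (x : ℝ), sOf s φ P z - sOf s φ Q z = 0) := by
  intro n
  induction n with
  | zero => intro P Q h; exact absurd h (by have := P.kpos; have := Q.kpos; omega)
  | succ n IH =>
    intro P Q hn
    by_cases hP : Red P
    · obtain ⟨j, hj, hmp, hmq⟩ := hP
      have hm := m_remove P j hj hmp hmq
      set P' := P.removeAt j hj hmp hmq with hP'
      have hk' : P'.k = P.k - 1 := rfl
      obtain ⟨⟨R, hRs, hRe⟩, hze⟩ := IH P' Q (by simp only [hk']; omega)
      set B : Mat2 := !![P.q j, -P.p j; P.q (j + 2), -P.p (j + 2)] with hB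
      have hdetB : B.det = 1 := by
        rw [hB, Matrix.det_fin_two_of]
        exact merged_det P j hj hmp hmq
      constructor
      · refine ⟨-(sing B) + R, ?_, ?_⟩
        · intro A hA
          rw [MonoidAlgebra.coeff_add] at hA
          rcases Finset.mem_union.1 (Finsupp.support_add hA) with h | h
          · rw [MonoidAlgebra.coeff_neg, Finsupp.support_neg] at h
            have h2 := Finsupp.support_single_subset h
            rw [Finset.mem_singleton] at h2
            rw [h2, hdetB]
            exact one_ne_zero
          · exact hRs A h
        · have key : (1 - sing Tm - sing (Mm * Tm * Mm)) * (-(sing B) + R)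
              = (mOf P - mOf P') + (mOf P' - mOf Q) := by
            rw [mul_add, ← hRe, hm]
            noncomm_ring
          rw [key]
          abel
      · intro z hz
        have h0 := s_remove hlam hLewis P j hj hmp hmq hz
        have h1 := hze z hz
        have hsplit : sOf s φ P z - sOf s φ Q z
            = (sOf s φ P z - sOf s φ P' z) + (sOf s φ P' z - sOf s φ Q z) := by ring
        rw [hsplit, h0, h1]
        ring
    · by_cases hQ : Red Q
      · obtain ⟨j, hj, hmp, hmq⟩ := hQ
        have hm := m_remove Q j hj hmp hmq
        set Q' := Q.removeAt j hj hmp hmq with hQ'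
        have hk' : Q'.k = Q.k - 1 := rfl
        obtain ⟨⟨R, hRs, hRe⟩, hze⟩ := IH P Q' (by simp only [hk']; omega)
        set B : Mat2 := !![Q.q j, -Q.p j; Q.q (j + 2), -Q.p (j + 2)] with hB
        have hdetB : B.det = 1 := by
          rw [hB, Matrix.det_fin_two_of]
          exact merged_det Q j hj hmp hmq
        constructor
        · refine ⟨sing B + R, ?_, ?_⟩
          · intro A hA
            rw [MonoidAlgebra.coeff_add] at hA
            rcases Finset.mem_union.1 (Finsupp.support_add hA) with h | h
            · have h2 := Finsupp.support_single_subset h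
              rw [Finset.mem_singleton] at h2
              rw [h2, hdetB]
              exact one_ne_zero
            · exact hRs A h
          · have key : (1 - sing Tm - sing (Mm * Tm * Mm)) * (sing B + R)
                = (mOf P - mOf Q') - (mOf Q - mOf Q') := by
              rw [mul_add, ← hRe, hm]
              noncomm_ring
            rw [key]
            abel
        · intro z hz
          have h0 := s_remove hlam hLewis Q j hj hmp hmq hz
          have h1 := hze z hz
          have hsplit : sOf s φ P z - sOf s φ Q z
              = (sOf s φ P z - sOf s φ Q' z) - (sOf s φ Q z - sOf s φ Q' z) := by ring
          rw [hsplit, h0, h1]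
          ring
      · have hk := irr_keq P Q hP hQ
        have hag := irr_agree P Q hP hQ
        have hm : mOf P = mOf Q := by
          rw [mOf, mOf, ← hk]
          apply Finset.sum_congr rfl
          intro i hi
          have hi' := Finset.mem_range.1 hi
          obtain ⟨e1, e2⟩ := hag i (by omega) (by omega)
          obtain ⟨e3, e4⟩ := hag (i + 1) (by omega) (by omega)
          rw [e1, e2, e3, e4]
        have hs' : ∀ z : ℂ, sOf s φ P z = sOf s φ Q z := by
          intro z
          rw [sOf, sOf, ← hk]
          apply Finset.sum_congr rfl
          intro i hi
          have hi' := Finset.mem_range.1 hi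
          obtain ⟨e1, e2⟩ := hag i (by omega) (by omega)
          obtain ⟨e3, e4⟩ := hag (i + 1) (by omega) (by omega)
          rw [e1, e2, e3, e4]
        refine ⟨⟨0, by simp, by rw [hm]; simp⟩, fun z hz => by rw [hs' z]; ring⟩


/-- Lemma 7.4: for any two partitions `P₁ = (p₁ j / q₁ j)_{j ≤ k₁}` and
`P₂ = (p₂ j / q₂ j)_{j ≤ k₂}` of the same `x ∈ ℚ⁺`, the difference
`m(P₁) − m(P₂)` lies in the right ideal `ℐ = (I − T − MTM)·ℤ[Mat_*(2, ℤ)]`;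
moreover if `φ` solves the Lewis equation
`φ(z) = φ(z+1) + λ z^{−2s} φ(1 + 1/z)` with `λ = ±1`, then
`φ|ₛ(m(P₁) − m(P₂))` is well defined and equal to `0`. -/
theorem m_partition_difference (x : ℚ) (hx : 0 < x)
    (k₁ k₂ : ℕ) (p₁ q₁ p₂ q₂ : ℕ → ℤ)
    (hcop₁ : ∀ j ≤ k₁, Int.gcd (p₁ j) (q₁ j) = 1)
    (hqnn₁ : ∀ j ≤ k₁, 0 ≤ q₁ j)
    (hdet₁ : ∀ j < k₁, p₁ j * q₁ (j + 1) - p₁ (j + 1) * q₁ j = 1)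
    (hx₁ : (p₁ 0 : ℚ) / (q₁ 0 : ℚ) = x) (hq₁ : 0 < q₁ 0)
    (hend₁ : p₁ k₁ = -1 ∧ q₁ k₁ = 0)
    (hcop₂ : ∀ j ≤ k₂, Int.gcd (p₂ j) (q₂ j) = 1)
    (hqnn₂ : ∀ j ≤ k₂, 0 ≤ q₂ j)
    (hdet₂ : ∀ j < k₂, p₂ j * q₂ (j + 1) - p₂ (j + 1) * q₂ j = 1)
    (hx₂ : (p₂ 0 : ℚ) / (q₂ 0 : ℚ) = x) (hq₂ : 0 < q₂ 0)
    (hend₂ : p₂ k₂ = -1 ∧ q₂ k₂ = 0)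
    (s lam : ℂ) (hlam : lam = 1 ∨ lam = -1)
    (φ : ℂ → ℂ) (hφ : DifferentiableOn ℂ φ (cut 0)ᶜ)
    (hLewis : ∀ z ∉ cut 0, φ z = φ (z + 1) + lam * z ^ (-(2 * s)) * φ (1 + 1 / z)) :
    (∃ R : MonoidAlgebra ℤ Mat2, (∀ A ∈ R.coeff.support, A.det ≠ 0) ∧
      (∑ j ∈ Finset.range k₁, sing !![q₁ j, -p₁ j; q₁ (j + 1), -p₁ (j + 1)]) -
        (∑ j ∈ Finset.range k₂, sing !![q₂ j, -p₂ j; q₂ (j + 1), -p₂ (j + 1)]) =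
      (1 - sing Tm - sing (Mm * Tm * Mm)) * R) ∧
    (∀ z ∉ cut ((x : ℝ)),
      (∑ j ∈ Finset.range k₁,
        slash s (q₁ j) (-p₁ j) (q₁ (j + 1)) (-p₁ (j + 1)) φ z) -
      (∑ j ∈ Finset.range k₂,
        slash s (q₂ j) (-p₂ j) (q₂ (j + 1)) (-p₂ (j + 1)) φ z) = 0) := by
  obtain ⟨he1p, he1q⟩ := hend₁
  obtain ⟨he2p, he2q⟩ := hend₂
  exact main x s lam hlam φ hLewis (k₁ + k₂)
    ⟨k₁, p₁, q₁, hcop₁, hqnn₁, hdet₁, hx₁, hq₁, he1p, he1q⟩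
    ⟨k₂, p₂, q₂, hcop₂, hqnn₂, hdet₂, hx₂, hq₂, he2p, he2q⟩ le_rfl
end

section
/- Let n ∈ ℕ. For every matrix A ∈ S_n there exist a unique positive integer m with m² | n and a unique matrix B ∈ S_{n/m²} whose four entries have greatest common divisor 1, such that A = m·B. Consequently, in the free abelian group on 2×2 integer matrices, Σ_{A ∈ S_n} A = Σ_{m : m² | n} Σ_B m·B, where the inner sum runs over all B ∈ S_{n/m²} with entries of greatest common divisor 1; i.e. the Hecke element T_n = Σ_{A ∈ S_n} A satisfies T_n = Σ_{m² | n} (m, 0; 0, m)·T̃_{n/m²}, and T_n = T̃_n if and only if n is squarefree. -/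
/-- `Sset n`: matrices `(a, b; c, d)` with `a > c ≥ 0`, `d > b ≥ 0`,
`ad − bc = n`. -/
def Sset (n : ℕ) : Set Mat2 :=
  {A | 0 ≤ A 1 0 ∧ A 1 0 < A 0 0 ∧ 0 ≤ A 0 1 ∧ A 0 1 < A 1 1 ∧
    A 0 0 * A 1 1 - A 0 1 * A 1 0 = (n : ℤ)}

/-- The Hecke element `T_n = Σ_{A ∈ S_n} A` (all entries of elements of `S_n`
lie in `{0, …, n}`). -/
noncomputable def Tfull (n : ℕ) : MonoidAlgebra ℤ Mat2 :=
  ∑ a ∈ Finset.range (n + 1), ∑ b ∈ Finset.range (n + 1),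
    ∑ c ∈ Finset.range (n + 1), ∑ d ∈ Finset.range (n + 1),
      if c < a ∧ b < d ∧ a * d = n + b * c then
        sing !![(a : ℤ), (b : ℤ); (c : ℤ), (d : ℤ)]
      else 0

/-- `T̃_n = Σ A`, the sum over all `A ∈ S_n` whose entries have greatest common
divisor `1`. -/
noncomputable def Ttil (n : ℕ) : MonoidAlgebra ℤ Mat2 :=
  ∑ a ∈ Finset.range (n + 1), ∑ b ∈ Finset.range (n + 1),
    ∑ c ∈ Finset.range (n + 1), ∑ d ∈ Finset.range (n + 1),
      if c < a ∧ b < d ∧ a * d = n + b * c ∧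
          Nat.gcd (Nat.gcd a b) (Nat.gcd c d) = 1 then
        sing !![(a : ℤ), (b : ℤ); (c : ℤ), (d : ℤ)]
      else 0

/-! Write `g` for the gcd of the entries of `A ∈ S_n` and `A = g • B`. Then `B` is primitive,
`n = det A = g² det B`, and the inequalities defining `S_n` are invariant under scaling by `g > 0`,
so `B ∈ S_{n/g²}`. The factorisation is unique because the entry-gcd of `m • B` is `m` times that
of `B`. Hence `A ↦ (g, B)` is a bijection from `S_n` onto the index set of the double sum, and
`(g, 0; 0, g) · B = g • B`. If `n` is squarefree every `g` is `1`; conversely, if `m² ∣ n` then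
`m • (1, 0; 0, n/m²) ∈ S_n` has entry-gcd `m`. -/

open Finset

def entryGcd (A : Mat2) : ℕ := Int.gcd (Int.gcd (A 0 0) (A 0 1)) (Int.gcd (A 1 0) (A 1 1))

def primitivePart (A : Mat2) : Mat2 := A.map (· / (entryGcd A : ℤ))

lemma entryGcd_dvd (A : Mat2) (i j : Fin 2) : (entryGcd A : ℤ) ∣ A i j := by
  have h₀ : (entryGcd A : ℤ) ∣ Int.gcd (A 0 0) (A 0 1) := Int.gcd_dvd_left _ _
  have h₁ : (entryGcd A : ℤ) ∣ Int.gcd (A 1 0) (A 1 1) := Int.gcd_dvd_right _ _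
  fin_cases i <;> fin_cases j
  exacts [h₀.trans (Int.gcd_dvd_left _ _), h₀.trans (Int.gcd_dvd_right _ _),
    h₁.trans (Int.gcd_dvd_left _ _), h₁.trans (Int.gcd_dvd_right _ _)]

lemma entryGcd_smul (m : ℕ) (B : Mat2) : entryGcd ((m : ℤ) • B) = m * entryGcd B := by
  simp only [entryGcd, Matrix.smul_apply, smul_eq_mul, Int.gcd_mul_left, Int.natAbs_natCast]
  rw [Int.gcd_natCast_natCast, Int.gcd_natCast_natCast, Nat.gcd_mul_left]

lemma smul_primitivePart (A : Mat2) : (entryGcd A : ℤ) • primitivePart A = A := by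
  ext i j
  simp [primitivePart, Int.mul_ediv_cancel' (entryGcd_dvd A i j)]

lemma entryGcd_primitivePart {A : Mat2} (hA : entryGcd A ≠ 0) :
    entryGcd (primitivePart A) = 1 := by
  have h := entryGcd_smul (entryGcd A) (primitivePart A)
  rw [smul_primitivePart] at h
  simpa [hA] using h

lemma primitivePart_smul {m : ℕ} {B : Mat2} (hm : m ≠ 0) (hB : entryGcd B = 1) :
    primitivePart ((m : ℤ) • B) = B := by
  ext i j
  rw [primitivePart, Matrix.map_apply, entryGcd_smul, hB, mul_one, Matrix.smul_apply, smul_eq_mul,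
    Int.mul_ediv_cancel_left _ (by exact_mod_cast hm)]

lemma smul_mem_Sset_iff {m n : ℕ} {B : Mat2} (hm : 0 < m) (hmn : m ^ 2 ∣ n) :
    (m : ℤ) • B ∈ Sset n ↔ B ∈ Sset (n / m ^ 2) := by
  obtain ⟨k, rfl⟩ := hmn
  have hm' : (0 : ℤ) < m := by exact_mod_cast hm
  rw [Nat.mul_div_cancel_left k (by positivity)]
  simp only [Sset, Set.mem_ofPred_eq, Matrix.smul_apply, smul_eq_mul, Nat.cast_mul, Nat.cast_pow,
    mul_nonneg_iff_of_pos_left hm', mul_lt_mul_iff_right₀ hm']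
  have : (m : ℤ) * B 0 0 * ((m : ℤ) * B 1 1) - (m : ℤ) * B 0 1 * ((m : ℤ) * B 1 0) =
      (m : ℤ) ^ 2 * (B 0 0 * B 1 1 - B 0 1 * B 1 0) := by ring
  rw [this, mul_right_inj' (by positivity)]

lemma mem_Icc_of_mem_Sset {n : ℕ} {A : Mat2} (hA : A ∈ Sset n) (i j : Fin 2) :
    A i j ∈ Set.Icc 0 (n : ℤ) := by
  obtain ⟨hc, hca, hb, hbd, hdet⟩ := hA
  -- `(a - 1)(d - 1) ≥ b c` because `a > c ≥ 0` and `d > b ≥ 0`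
  have : A 0 0 + A 1 1 ≤ n + 1 := by
    nlinarith [mul_nonneg (sub_nonneg.2 hca.le) hb, mul_nonneg (sub_nonneg.2 hbd.le) hc]
  fin_cases i <;> fin_cases j <;> simp <;> omega

lemma entryGcd_pos_of_mem_Sset {n : ℕ} {A : Mat2} (hA : A ∈ Sset n) : 0 < entryGcd A := by
  refine Nat.pos_of_ne_zero fun h => ?_
  have h₀₀ := congrArg (fun M : Mat2 => M 0 0) (smul_primitivePart A)
  simp only [h, Nat.cast_zero, zero_smul, Matrix.zero_apply] at h₀₀
  exact (hA.1.trans_lt hA.2.1).ne h₀₀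

lemma sq_entryGcd_dvd_of_mem_Sset {n : ℕ} {A : Mat2} (hA : A ∈ Sset n) : entryGcd A ^ 2 ∣ n := by
  set B := primitivePart A
  have hdet := hA.2.2.2.2
  rw [← smul_primitivePart A] at hdet
  simp only [Matrix.smul_apply, smul_eq_mul] at hdet
  rw [← Int.natCast_dvd_natCast, ← hdet, Nat.cast_pow]
  exact ⟨B 0 0 * B 1 1 - B 0 1 * B 1 0, by ring⟩

lemma primitivePart_mem_Sset {n : ℕ} {A : Mat2} (hA : A ∈ Sset n) :
    primitivePart A ∈ Sset (n / entryGcd A ^ 2) := by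
  rw [← smul_mem_Sset_iff (entryGcd_pos_of_mem_Sset hA) (sq_entryGcd_dvd_of_mem_Sset hA),
    smul_primitivePart]
  exact hA

lemma exists_smul_primitive_unique {n : ℕ} {A : Mat2} (hA : A ∈ Sset n) :
    ∃ m : ℕ, ∃ B : Mat2, 0 < m ∧ m ^ 2 ∣ n ∧ B ∈ Sset (n / m ^ 2) ∧ entryGcd B = 1 ∧
      A = (m : ℤ) • B ∧
      ∀ m' : ℕ, ∀ B' : Mat2, 0 < m' → m' ^ 2 ∣ n → B' ∈ Sset (n / m' ^ 2) →
        entryGcd B' = 1 → A = (m' : ℤ) • B' → m' = m ∧ B' = B := by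
  have hg := entryGcd_pos_of_mem_Sset hA
  refine ⟨entryGcd A, primitivePart A, hg, sq_entryGcd_dvd_of_mem_Sset hA,
    primitivePart_mem_Sset hA, entryGcd_primitivePart hg.ne', (smul_primitivePart A).symm, ?_⟩
  rintro m' B' hm' - - hB' rfl
  exact ⟨by rw [entryGcd_smul, hB', mul_one], (primitivePart_smul hm'.ne' hB').symm⟩

instance (n : ℕ) : DecidablePred (· ∈ Sset n) := fun A =>
  inferInstanceAs <| Decidable <| 0 ≤ A 1 0 ∧ A 1 0 < A 0 0 ∧ 0 ≤ A 0 1 ∧ A 0 1 < A 1 1 ∧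
    A 0 0 * A 1 1 - A 0 1 * A 1 0 = (n : ℤ)

def natMat (q : ℕ × ℕ × ℕ × ℕ) : Mat2 := !![(q.1 : ℤ), q.2.1; q.2.2.1, q.2.2.2]

lemma natMat_injective : Function.Injective natMat := by
  rintro ⟨a, b, c, d⟩ ⟨a', b', c', d'⟩ h
  have := congrFun₂ h
  simp_all [natMat]

def natBox (n : ℕ) : Finset Mat2 :=
  (range (n + 1) ×ˢ range (n + 1) ×ˢ range (n + 1) ×ˢ range (n + 1)).image natMat

lemma mem_natBox_of_mem_Sset {n : ℕ} {A : Mat2} (hA : A ∈ Sset n) : A ∈ natBox n := by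
  obtain ⟨h₀₀, h₀₀'⟩ := mem_Icc_of_mem_Sset hA 0 0
  obtain ⟨h₀₁, h₀₁'⟩ := mem_Icc_of_mem_Sset hA 0 1
  obtain ⟨h₁₀, h₁₀'⟩ := mem_Icc_of_mem_Sset hA 1 0
  obtain ⟨h₁₁, h₁₁'⟩ := mem_Icc_of_mem_Sset hA 1 1
  refine mem_image.2 ⟨((A 0 0).toNat, (A 0 1).toNat, (A 1 0).toNat, (A 1 1).toNat), ?_, ?_⟩
  · simp only [mem_product, mem_range]
    refine ⟨?_, ?_, ?_, ?_⟩ <;> omega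
  · ext i j
    fin_cases i <;> fin_cases j <;> simp [natMat, *]

instance (n : ℕ) : Fintype (Sset n) :=
  Fintype.ofFinset ((natBox n).filter (· ∈ Sset n)) fun A => by
    simpa using mem_natBox_of_mem_Sset

lemma natMat_mem_Sset_iff {n a b c d : ℕ} :
    natMat (a, b, c, d) ∈ Sset n ↔ c < a ∧ b < d ∧ a * d = n + b * c := by
  simp [Sset, natMat]
  omega

lemma entryGcd_natMat (a b c d : ℕ) :
    entryGcd (natMat (a, b, c, d)) = Nat.gcd (Nat.gcd a b) (Nat.gcd c d) := by
  simp [entryGcd, natMat, Int.gcd_natCast_natCast]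

lemma sum_range_ite_sing (n : ℕ) (p : Mat2 → Prop) [DecidablePred p] :
    ∑ a ∈ range (n + 1), ∑ b ∈ range (n + 1), ∑ c ∈ range (n + 1), ∑ d ∈ range (n + 1),
      (if p (natMat (a, b, c, d)) then sing (natMat (a, b, c, d)) else 0) =
    ∑ A ∈ (natBox n).filter p, sing A := by
  rw [sum_filter, natBox, sum_image natMat_injective.injOn]
  simp only [sum_product]

lemma toFinset_Sset (n : ℕ) : (Sset n).toFinset = (natBox n).filter (· ∈ Sset n) :=
  Set.toFinset_ofFinset _ _

lemma Tfull_eq_sum (n : ℕ) : Tfull n = ∑ A ∈ (Sset n).toFinset, sing A := by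
  rw [toFinset_Sset, ← sum_range_ite_sing]
  simp only [Tfull, natMat_mem_Sset_iff]
  rfl

lemma Ttil_eq_sum (n : ℕ) :
    Ttil n = ∑ A ∈ (Sset n).toFinset with entryGcd A = 1, sing A := by
  rw [toFinset_Sset, filter_filter, ← sum_range_ite_sing]
  simp only [Ttil, natMat_mem_Sset_iff, entryGcd_natMat, and_assoc]
  rfl

lemma sing_smul (m : ℤ) (B : Mat2) : sing (m • B) = sing !![m, 0; 0, m] * sing B := by
  rw [sing, sing, sing, MonoidAlgebra.single_mul_single, one_mul]
  congr 1
  ext i j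
  fin_cases i <;> fin_cases j <;> simp [Matrix.mul_apply]

theorem Tfull_eq_sum_sing_mul_Ttil (n : ℕ) :
    Tfull n = ∑ m ∈ (range (n + 1)).filter (fun m => 0 < m ∧ m ^ 2 ∣ n),
      sing !![(m : ℤ), 0; 0, (m : ℤ)] * Ttil (n / m ^ 2) := by
  simp only [Ttil_eq_sum, mul_sum, ← sing_smul]
  rw [Tfull_eq_sum, sum_sigma']
  refine sum_nbij' (fun A => ⟨entryGcd A, primitivePart A⟩) (fun x => (x.1 : ℤ) • x.2)
    ?_ ?_ ?_ ?_ fun A _ => by rw [smul_primitivePart]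
  · intro A hA
    rw [Set.mem_toFinset] at hA
    have hg := entryGcd_pos_of_mem_Sset hA
    have hgA : entryGcd A ≤ n := by
      have := (mem_Icc_of_mem_Sset hA 0 0).2
      have := Int.le_of_dvd (hA.1.trans_lt hA.2.1) (entryGcd_dvd A 0 0)
      omega
    simp only [mem_sigma, mem_filter, mem_range, Set.mem_toFinset]
    exact ⟨⟨by omega, hg, sq_entryGcd_dvd_of_mem_Sset hA⟩, primitivePart_mem_Sset hA,
      entryGcd_primitivePart hg.ne'⟩
  · rintro ⟨m, B⟩ hx
    simp only [mem_sigma, mem_filter, mem_range, Set.mem_toFinset] at hx ⊢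
    exact (smul_mem_Sset_iff hx.1.2.1 hx.1.2.2).2 hx.2.1
  · intro A _
    exact smul_primitivePart A
  · rintro ⟨m, B⟩ hx
    simp only [mem_sigma, mem_filter, mem_range, Set.mem_toFinset] at hx
    rw [entryGcd_smul, hx.2.2, mul_one, primitivePart_smul hx.1.2.1.ne' hx.2.2]

lemma MonoidAlgebra.sum_single_one_inj {k G : Type*} [Semiring k] [Nontrivial k]
    {s t : Finset G} : ∑ g ∈ s, single g (1 : k) = ∑ g ∈ t, single g 1 ↔ s = t := by
  classical
  refine ⟨fun h => ?_, fun h => h ▸ rfl⟩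
  ext g
  have hg := congrArg (fun x => x.coeff g) h
  simp only [coeff_sum, coeff_single, Finsupp.finsetSum_apply, Finsupp.single_apply, sum_ite_eq']
    at hg
  split_ifs at hg <;> simp_all

lemma squarefree_iff_forall_mem_Sset_entryGcd_eq_one {n : ℕ} (hn : 0 < n) :
    Squarefree n ↔ ∀ A ∈ Sset n, entryGcd A = 1 := by
  refine ⟨fun hsq A hA => Nat.isUnit_iff.1 (hsq _ ?_), fun h m hm => ?_⟩
  · simpa [sq] using sq_entryGcd_dvd_of_mem_Sset hA
  rw [← sq] at hm
  have hm₀ : 0 < m := Nat.pos_of_ne_zero <| by rintro rfl; simp at hm; omega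
  have hk : 0 < n / m ^ 2 := Nat.div_pos (Nat.le_of_dvd hn hm) (by positivity)
  have hB : !![1, 0; 0, ((n / m ^ 2 : ℕ) : ℤ)] ∈ Sset (n / m ^ 2) := by
    simp [Sset]
    exact_mod_cast hk
  have h₁ := h _ ((smul_mem_Sset_iff hm₀ hm).2 hB)
  rw [entryGcd_smul] at h₁
  simpa [entryGcd] using h₁

theorem Tfull_eq_Ttil_iff_squarefree {n : ℕ} (hn : 0 < n) : Tfull n = Ttil n ↔ Squarefree n := by
  rw [Tfull_eq_sum, Ttil_eq_sum]
  simp only [sing]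
  rw [MonoidAlgebra.sum_single_one_inj, eq_comm, filter_eq_self,
    squarefree_iff_forall_mem_Sset_entryGcd_eq_one hn]
  simp only [Set.mem_toFinset]

/-- Proposition 1.2: every `A ∈ S_n` is uniquely `m·B` with `m² ∣ n`, `m > 0`
and `B ∈ S_{n/m²}` of entry-gcd `1`; consequently
`T_n = Σ_{m² ∣ n} (m, 0; 0, m)·T̃_{n/m²}`, and `T_n = T̃_n` iff `n` is
squarefree. -/
theorem heckeOperator_decomposition (n : ℕ) (hn : 1 ≤ n) :
    (∀ A : Mat2, A ∈ Sset n →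
      ∃ m : ℕ, ∃ B : Mat2, 0 < m ∧ m ^ 2 ∣ n ∧ B ∈ Sset (n / m ^ 2) ∧
        Int.gcd (Int.gcd (B 0 0) (B 0 1)) (Int.gcd (B 1 0) (B 1 1)) = 1 ∧
        A = (m : ℤ) • B ∧
        (∀ m' : ℕ, ∀ B' : Mat2, 0 < m' → m' ^ 2 ∣ n → B' ∈ Sset (n / m' ^ 2) →
          Int.gcd (Int.gcd (B' 0 0) (B' 0 1)) (Int.gcd (B' 1 0) (B' 1 1)) = 1 →
          A = (m' : ℤ) • B' → m' = m ∧ B' = B)) ∧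
    (Tfull n = ∑ m ∈ (Finset.range (n + 1)).filter (fun m => 0 < m ∧ m ^ 2 ∣ n),
      sing !![(m : ℤ), 0; 0, (m : ℤ)] * Ttil (n / m ^ 2)) ∧
    (Tfull n = Ttil n ↔ Squarefree n) :=
  ⟨fun _ => exists_smul_primitive_unique, Tfull_eq_sum_sing_mul_Ttil n,
    Tfull_eq_Ttil_iff_squarefree hn⟩
end
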